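/- For every 0 < ψ_m < π there exists σ > 0 depending only on ψ_m such that every convex quadrilateral K satisfying mac(ψ_m) satisfies at least one of the following: (1) K satisfies DAC(ψ_m, π − ψ_m/2), i.e. every interior angle θ of K obeys ψ_m ≤ θ ≤ π − ψ_m/2; or (2) K is σ-regular, i.e. diam(K)/ρ ≤ σ. -/

import Mathlib

noncomputable section

open Real

/-- The Euclidean plane. -/
abbrev E2 := EuclideanSpace ℝ (Fin 2)

/-- The point (x, y) of the Euclidean plane. -/
def pt2 (x y : ℝ) : E2 := WithLp.toLp 2 ![x, y]

/-- The planar cross product (determinant) of two vectors. -/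
def cross2 (u v : E2) : ℝ := u 0 * v 1 - u 1 * v 0

/-- `V : Fin 4 → E2` lists the vertices of a convex quadrilateral in counterclockwise
order: each consecutive triple is positively oriented. -/
def ccwQuad (V : Fin 4 → E2) : Prop :=
  ∀ i : Fin 4, 0 < cross2 (V (i + 1) - V i) (V (i + 2) - V i)

/-- The convex quadrilateral spanned by the four vertices. -/
def quadSet (V : Fin 4 → E2) : Set E2 := convexHull ℝ (Set.range V)

/-- The interior angle of the quadrilateral `V` at the vertex `V i`. -/
def intAngle (V : Fin 4 → E2) (i : Fin 4) : ℝ :=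
  EuclideanGeometry.angle (V (i - 1)) (V i) (V (i + 1))

/-- All three interior angles of the triangle `A B C` are at most `ψ`. -/
def triMAC (A B C : E2) (ψ : ℝ) : Prop :=
  EuclideanGeometry.angle C A B ≤ ψ ∧ EuclideanGeometry.angle A B C ≤ ψ ∧
    EuclideanGeometry.angle B C A ≤ ψ

/-- The regular decomposition property `RDP(N, ψM)`: one diagonal `d1` divides the
quadrilateral into two triangles whose interior angles are all `≤ ψM`, and the other
diagonal `d2` satisfies `|d2| ≤ N·|d1|`. -/
def RDP (V : Fin 4 → E2) (N ψM : ℝ) : Prop :=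
  (dist (V 1) (V 3) ≤ N * dist (V 0) (V 2) ∧
    triMAC (V 0) (V 1) (V 2) ψM ∧ triMAC (V 0) (V 2) (V 3) ψM) ∨
  (dist (V 0) (V 2) ≤ N * dist (V 1) (V 3) ∧
    triMAC (V 1) (V 2) (V 3) ψM ∧ triMAC (V 3) (V 0) (V 1) ψM)

/-- Two subsets of the plane are `C`-equivalent if an affine map `X ↦ B X + P` with
`‖B‖ ≤ C` and `‖B⁻¹‖ ≤ C` maps one onto the other. -/
def CEquiv (C : ℝ) (K K' : Set E2) : Prop :=
  ∃ B : E2 ≃L[ℝ] E2, ∃ P : E2,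
    ‖(B : E2 →L[ℝ] E2)‖ ≤ C ∧ ‖(B.symm : E2 →L[ℝ] E2)‖ ≤ C ∧
    (fun X => B X + P) '' K = K'

/-- The quadrilateral `K(a,b,ta,tb)` with vertices `(0,0), (a,0), (ta,tb), (0,b)`. -/
def quadK (a b ta tb : ℝ) : Set E2 :=
  convexHull ℝ {pt2 0 0, pt2 a 0, pt2 ta tb, pt2 0 b}

/-- Length of the side `l` joining `V3 = (ta, tb)` and `V4 = (0, b)` of `K(a,b,ta,tb)`. -/
def lenl (b ta tb : ℝ) : ℝ := Real.sqrt (ta ^ 2 + (b - tb) ^ 2)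

/-- The minimum of the four side lengths of `K(a,b,ta,tb)`. -/
def sideMin (a b ta tb : ℝ) : ℝ :=
  min (min a b) (min (lenl b ta tb) (Real.sqrt ((a - ta) ^ 2 + tb ^ 2)))

/-- The sine of the interior angle α at `V4 = (0,b)` of the triangle with vertices
`V2 = (a,0)`, `V3 = (ta,tb)`, `V4 = (0,b)`. -/
def sinAlpha (a b ta tb : ℝ) : ℝ :=
  Real.sin (EuclideanGeometry.angle (pt2 a 0) (pt2 0 b) (pt2 ta tb))

/-- Twice the inradius: `ρ = 2·sup{ r ≥ 0 : some closed ball of radius r fits in K }`. -/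
def rho (K : Set E2) : ℝ :=
  2 * sSup {r : ℝ | 0 ≤ r ∧ ∃ c : E2, Metric.closedBall c r ⊆ K}

/-!
If every interior angle is at most `π - ψ/2` there is nothing to prove. Otherwise, after
relabelling, the angle at `B` of the quadrilateral `ABCD` exceeds `π - ψ/2`. The two other
angles of the triangle `ABC` then add up to less than `ψ/2`, so by the triangle inequality for
angles every angle of the triangle `ACD` lies in `[ψ/2, π - ψ/2]`. By the law of sines its sides
are comparable to `d = |AC|`, with constants `sin (ψ/2)`, and it contains a ball of radius
`sin (ψ/2)^3 d / 9` around its centroid. As `|AB| ≤ d` (the angle at `B` is obtuse), the whole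
quadrilateral lies in the ball of radius `d / sin (ψ/2)` around `A`, whence
`diam K / ρ ≤ 9 / sin (ψ/2)^4`.
-/

open EuclideanGeometry

lemma real_inner_E2_eq (u v : E2) : inner ℝ u v = u 0 * v 0 + u 1 * v 1 := by
  simp [PiLp.inner_apply, Fin.sum_univ_two]; ring

lemma sin_angle_mul_norm_mul_norm_eq_abs_cross2 (u v : E2) :
    sin (InnerProductGeometry.angle u v) * (‖u‖ * ‖v‖) = |cross2 u v| := by
  rw [InnerProductGeometry.sin_angle_mul_norm_mul_norm, ← Real.sqrt_sq_eq_abs]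
  congr 1
  simp only [real_inner_E2_eq, cross2]; ring

lemma abs_cross2_le (u v : E2) : |cross2 u v| ≤ ‖u‖ * ‖v‖ := by
  rw [← sin_angle_mul_norm_mul_norm_eq_abs_cross2]
  exact mul_le_of_le_one_left (by positivity) (sin_le_one _)

lemma cross2_sub_sub_eq (B C x y : E2) :
    cross2 (B - x) (C - x) = cross2 (B - y) (C - y) + cross2 (x - y) (B - C) := by
  simp only [cross2, PiLp.sub_apply]; ring

lemma cross2_sub_sub_rotate (A B C : E2) :
    cross2 (B - A) (C - A) = cross2 (C - B) (A - B) := by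
  simp only [cross2, PiLp.sub_apply]; ring

lemma sin_angle_mul_dist_mul_dist_eq_abs_cross2 (A C D : E2) :
    sin (∠ C A D) * (dist A C * dist A D) = |cross2 (C - A) (D - A)| := by
  rw [dist_comm A C, dist_comm A D, dist_eq_norm, dist_eq_norm]
  exact sin_angle_mul_norm_mul_norm_eq_abs_cross2 _ _

lemma mem_convexHull_triangle_of_cross2_nonneg {A B C x : E2}
    (hA : 0 ≤ cross2 (B - x) (C - x)) (hB : 0 ≤ cross2 (C - x) (A - x))
    (hC : 0 ≤ cross2 (A - x) (B - x)) (hS : 0 < cross2 (B - A) (C - A)) :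
    x ∈ convexHull ℝ {A, B, C} := by
  set S := cross2 (B - A) (C - A)
  have hsum :
      cross2 (B - x) (C - x) + cross2 (C - x) (A - x) + cross2 (A - x) (B - x) = S := by
    simp only [S, cross2, PiLp.sub_apply]; ring
  have hx : x = ∑ i, ![cross2 (B - x) (C - x) / S, cross2 (C - x) (A - x) / S,
      cross2 (A - x) (B - x) / S] i • ![A, B, C] i := by
    ext i
    simp only [Fin.sum_univ_three, Matrix.cons_val, PiLp.add_apply, PiLp.smul_apply, smul_eq_mul]
    field_simp
    fin_cases i <;> (simp only [Fin.zero_eta, Fin.mk_one, S, cross2, PiLp.sub_apply]; ring)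
  rw [hx]
  refine (convex_convexHull ℝ _).sum_mem (fun i _ => ?_) ?_
    (fun i _ => subset_convexHull ℝ _ ?_)
  · fin_cases i
    exacts [div_nonneg hA hS.le, div_nonneg hB hS.le, div_nonneg hC hS.le]
  · simp only [Fin.sum_univ_three, Matrix.cons_val]
    field_simp
    linarith
  · fin_cases i <;> simp

lemma closedBall_subset_convexHull_triangle {A B C : E2} (hS : 0 < cross2 (B - A) (C - A)) :
    Metric.closedBall ((3 : ℝ)⁻¹ • (A + B + C))
        (cross2 (B - A) (C - A) / (3 * (dist A B + dist B C + dist C A))) ⊆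
      convexHull ℝ {A, B, C} := by
  intro x hx
  set S := cross2 (B - A) (C - A)
  set M := dist A B + dist B C + dist C A
  set P : E2 := (3 : ℝ)⁻¹ • (A + B + C)
  have hAB : A ≠ B := by rintro rfl; simp [S, cross2] at hS
  have hM : 0 < M := by
    have := dist_pos.mpr hAB; positivity
  have hxP : ‖x - P‖ * M ≤ S / 3 := by
    rw [Metric.mem_closedBall, dist_eq_norm, le_div_iff₀ (by positivity)] at hx
    linarith
  -- each barycentric coordinate of `x` is within `‖x - P‖ * M` of its value `S / 3` at `P`
  have key : ∀ Y Z : E2, cross2 (Y - P) (Z - P) = S / 3 → dist Y Z ≤ M →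
      0 ≤ cross2 (Y - x) (Z - x) := by
    intro Y Z hP hYZ
    have h1 := neg_abs_le (cross2 (x - P) (Y - Z))
    have h2 := abs_cross2_le (x - P) (Y - Z)
    have h3 : ‖x - P‖ * ‖Y - Z‖ ≤ ‖x - P‖ * M := by
      gcongr; rwa [← dist_eq_norm]
    rw [cross2_sub_sub_eq Y Z x P, hP]
    linarith
  have hP : ∀ i : Fin 2, P i = (A i + B i + C i) / 3 := by
    intro i; simp only [P, PiLp.smul_apply, PiLp.add_apply, smul_eq_mul]; ring
  have hdA := dist_nonneg (x := A) (y := B)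
  have hdB := dist_nonneg (x := B) (y := C)
  have hdC := dist_nonneg (x := C) (y := A)
  apply mem_convexHull_triangle_of_cross2_nonneg _ _ _ hS
  · exact key B C (by simp only [S, cross2, PiLp.sub_apply, hP]; ring) (by linarith)
  · exact key C A (by simp only [S, cross2, PiLp.sub_apply, hP]; ring) (by linarith)
  · exact key A B (by simp only [S, cross2, PiLp.sub_apply, hP]; ring) (by linarith)

section Triangle

variable {V P : Type*} [NormedAddCommGroup V] [InnerProductSpace ℝ V] [MetricSpace P]
  [NormedAddTorsor V P]

lemma sin_angle_mul_dist_le_dist (p₁ p₂ p₃ : P) :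
    sin (∠ p₁ p₂ p₃) * dist p₂ p₃ ≤ dist p₃ p₁ := by
  rw [law_sin]
  exact mul_le_of_le_one_left dist_nonneg (sin_le_one _)

lemma dist_le_dist_of_pi_div_two_le_angle {p₁ p₂ p₃ : P} (h : π / 2 ≤ ∠ p₁ p₂ p₃) :
    dist p₁ p₂ ≤ dist p₁ p₃ := by
  have hcos : cos (∠ p₁ p₂ p₃) ≤ 0 := cos_nonpos_of_pi_div_two_le_of_le h (by
    linarith [angle_le_pi p₁ p₂ p₃, pi_pos])
  have := law_cos p₁ p₂ p₃
  nlinarith [dist_nonneg (x := p₁) (y := p₂), dist_nonneg (x := p₁) (y := p₃),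
    mul_nonpos_of_nonneg_of_nonpos (mul_nonneg (dist_nonneg (x := p₁) (y := p₂))
      (dist_nonneg (x := p₃) (y := p₂))) hcos]

end Triangle

lemma sin_le_sin_of_le_of_le_pi_sub {t x : ℝ} (ht : 0 ≤ t) (htx : t ≤ x)
    (hxt : x ≤ π - t) : sin t ≤ sin x := by
  have h := Real.sin_sub_sin x t
  have h1 : 0 ≤ sin ((x - t) / 2) := sin_nonneg_of_nonneg_of_le_pi (by linarith) (by linarith)
  have h2 : 0 ≤ cos ((x + t) / 2) :=
    cos_nonneg_of_neg_pi_div_two_le_of_le (by linarith) (by linarith)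
  nlinarith [mul_nonneg h1 h2]

lemma two_mul_le_rho {K : Set E2} (hK : Bornology.IsBounded K) {c : E2} {r : ℝ} (hr : 0 ≤ r)
    (hc : Metric.closedBall c r ⊆ K) : 2 * r ≤ rho K := by
  have hbdd : BddAbove {r : ℝ | 0 ≤ r ∧ ∃ c : E2, Metric.closedBall c r ⊆ K} := by
    refine ⟨Metric.diam K / 2, fun r' ⟨hr', c', hc'⟩ => ?_⟩
    have := Metric.diam_mono hc' hK
    rw [Metric.diam_closedBall_eq c' hr'] at this
    linarith
  rw [rho]
  linarith [le_csSup hbdd ⟨hr, c, hc⟩]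

lemma diam_div_rho_le {K : Set E2} {x c : E2} {R r : ℝ} (hr : 0 < r)
    (hKR : K ⊆ Metric.closedBall x R) (hrK : Metric.closedBall c r ⊆ K) :
    Metric.diam K / rho K ≤ R / r := by
  have hR : 0 ≤ R :=
    Metric.nonempty_closedBall.mp ⟨c, hKR (hrK (Metric.mem_closedBall_self hr.le))⟩
  have hdiam : Metric.diam K ≤ 2 * R :=
    (Metric.diam_mono hKR Metric.isBounded_closedBall).trans (Metric.diam_closedBall hR)
  have hrho := two_mul_le_rho (Metric.isBounded_closedBall.subset hKR) hr.le hrK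
  calc Metric.diam K / rho K ≤ (2 * R) / (2 * r) :=
        div_le_div₀ (by positivity) hdiam (by positivity) hrho
    _ = R / r := by ring

lemma exists_closedBall_subset_triangle {A C D : E2} {s : ℝ} (hs : 0 < s)
    (hS : 0 < cross2 (C - A) (D - A)) (hA : s ≤ sin (∠ C A D)) (hC : s ≤ sin (∠ A C D))
    (hD : s ≤ sin (∠ A D C)) :
    ∃ c, Metric.closedBall c (s ^ 3 * dist A C / 9) ⊆ convexHull ℝ {A, C, D} := by
  set d := dist A C
  set e := dist D A
  set f := dist C D
  have hs1 : s ≤ 1 := hA.trans (sin_le_one _)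
  have hed : s * e ≤ d := by
    have := sin_angle_mul_dist_le_dist C D A
    rw [angle_comm] at this
    nlinarith [dist_nonneg (x := D) (y := A)]
  have hfd : s * f ≤ d := by
    have := sin_angle_mul_dist_le_dist A D C
    rw [dist_comm D C, dist_comm C A] at this
    nlinarith [dist_nonneg (x := C) (y := D)]
  have hde : s * d ≤ e := by
    have := sin_angle_mul_dist_le_dist D C A
    rw [angle_comm, dist_comm A D] at this
    nlinarith [dist_nonneg (x := C) (y := A), dist_comm C A]
  have harea : sin (∠ C A D) * (d * e) = cross2 (C - A) (D - A) := by
    rw [← abs_of_pos hS, ← sin_angle_mul_dist_mul_dist_eq_abs_cross2, dist_comm A D]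
  refine ⟨_, (Metric.closedBall_subset_closedBall ?_).trans
    (closedBall_subset_convexHull_triangle hS)⟩
  have hd : 0 < d := dist_pos.mpr (by rintro rfl; simp [cross2] at hS)
  have he : 0 ≤ e := dist_nonneg
  have hf : 0 ≤ f := dist_nonneg
  have hM : s * (d + f + e) ≤ 3 * d := by nlinarith
  have hSlow : s ^ 2 * d ^ 2 ≤ cross2 (C - A) (D - A) := by
    rw [← harea]
    nlinarith [mul_le_mul_of_nonneg_left hA (mul_nonneg hd.le he),
      mul_le_mul_of_nonneg_left hde (mul_nonneg hs.le hd.le)]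
  rw [div_le_div_iff₀ (by norm_num) (by positivity)]
  nlinarith [mul_le_mul_of_nonneg_left hM (by positivity : 0 ≤ 3 * s ^ 2 * d)]

lemma sin_half_le_sin_angles_of_obtuse {ψ : ℝ} (hψ : 0 ≤ ψ) {A B C D : E2} (hBA : B ≠ A)
    (hCA : C ≠ A) (hA : ψ ≤ ∠ D A B) (hC : ψ ≤ ∠ B C D) (hD : ψ ≤ ∠ C D A)
    (hB : π - ψ / 2 < ∠ A B C) :
    sin (ψ / 2) ≤ sin (∠ C A D) ∧ sin (ψ / 2) ≤ sin (∠ A C D) ∧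
      sin (ψ / 2) ≤ sin (∠ A D C) := by
  have hABC := angle_add_angle_add_angle_eq_pi C hBA
  have hACD := angle_add_angle_add_angle_eq_pi D hCA
  have hA' := angle_le_angle_add_angle A D C B
  have hC' := angle_le_angle_add_angle C B A D
  rw [angle_comm D A C] at hA' hACD
  rw [angle_comm C D A] at hD hACD
  have := angle_nonneg C A B
  have := angle_nonneg B C A
  refine ⟨?_, ?_, ?_⟩ <;> apply sin_le_sin_of_le_of_le_pi_sub (by linarith) <;> linarith

lemma diam_div_rho_le_of_pi_sub_half_lt_intAngle_one {ψ : ℝ} (hψ : 0 < ψ) {V : Fin 4 → E2}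
    (hc : ccwQuad V) (hm : ∀ i, ψ ≤ intAngle V i) (hbig : π - ψ / 2 < intAngle V 1) :
    Metric.diam (quadSet V) / rho (quadSet V) ≤ 9 / sin (ψ / 2) ^ 4 := by
  set s := sin (ψ / 2)
  have hψπ : ψ ≤ π := (hm 0).trans (angle_le_pi _ _ _)
  have hs : 0 < s := sin_pos_of_pos_of_lt_pi (by linarith) (by linarith)
  have hs1 : s ≤ 1 := sin_le_one _
  have hS : 0 < cross2 (V 2 - V 0) (V 3 - V 0) := (cross2_sub_sub_rotate _ _ _).trans_gt (hc 2)
  have hBA : V 1 ≠ V 0 := by intro h; have := hc 0; simp [h, cross2] at this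
  have hCA : V 2 ≠ V 0 := by intro h; simp [h, cross2] at hS
  obtain ⟨hsA, hsC, hsD⟩ :=
    sin_half_le_sin_angles_of_obtuse (D := V 3) hψ.le hBA hCA (hm 0) (hm 2) (hm 3) hbig
  obtain ⟨c, hcK⟩ := exists_closedBall_subset_triangle hs hS hsA hsC hsD
  set d := dist (V 0) (V 2)
  have hd : 0 < d := dist_pos.mpr hCA.symm
  have hdd : d ≤ d / s := le_div_self hd.le hs hs1
  have hK : quadSet V ⊆ Metric.closedBall (V 0) (d / s) := by
    refine convexHull_min ?_ (convex_closedBall _ _)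
    rintro _ ⟨i, rfl⟩
    rw [Metric.mem_closedBall]
    fin_cases i
    · show dist (V 0) (V 0) ≤ d / s
      rw [dist_self]; positivity
    · rw [dist_comm]
      exact (dist_le_dist_of_pi_div_two_le_angle (by linarith : π / 2 ≤ intAngle V 1)).trans hdd
    · exact (dist_comm _ _).trans_le hdd
    · show dist (V 3) (V 0) ≤ d / s
      have := sin_angle_mul_dist_le_dist (V 2) (V 3) (V 0)
      rw [angle_comm] at this
      rw [le_div_iff₀ hs]
      nlinarith [dist_nonneg (x := V 3) (y := V 0)]
  have hball : Metric.closedBall c (s ^ 3 * d / 9) ⊆ quadSet V := by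
    refine hcK.trans (convexHull_mono ?_)
    simp only [Set.insert_subset_iff, Set.singleton_subset_iff]
    exact ⟨⟨0, rfl⟩, ⟨2, rfl⟩, ⟨3, rfl⟩⟩
  calc Metric.diam (quadSet V) / rho (quadSet V) ≤ (d / s) / (s ^ 3 * d / 9) :=
        diam_div_rho_le (by positivity) hK hball
    _ = 9 / s ^ 4 := by field_simp

lemma ccwQuad_comp_add_right {V : Fin 4 → E2} (hV : ccwQuad V) (k : Fin 4) :
    ccwQuad (fun i => V (i + k)) := by
  intro i
  simpa only [add_right_comm i k] using hV (i + k)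

lemma intAngle_comp_add_right (V : Fin 4 → E2) (k i : Fin 4) :
    intAngle (fun j => V (j + k)) i = intAngle V (i + k) := by
  simp only [intAngle, sub_add_eq_add_sub, add_right_comm i 1 k]

lemma quadSet_comp_add_right (V : Fin 4 → E2) (k : Fin 4) :
    quadSet (fun j => V (j + k)) = quadSet V := by
  rw [quadSet, quadSet, ← (Equiv.addRight k).surjective.range_comp V]
  rfl

/-- Every convex quadrilateral satisfying `mac(ψm)` either satisfies
`DAC(ψm, π − ψm/2)` or is σ-regular, with `σ` depending only on `ψm`. -/
theorem mac_implies_DAC_or_regular (ψm : ℝ) (h0 : 0 < ψm) (h1 : ψm < π) :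
    ∃ σ : ℝ, 0 < σ ∧
      ∀ V : Fin 4 → E2, ccwQuad V →
        (∀ i : Fin 4, ψm ≤ intAngle V i) →
        (∀ i : Fin 4, ψm ≤ intAngle V i ∧ intAngle V i ≤ π - ψm / 2) ∨
          Metric.diam (quadSet V) / rho (quadSet V) ≤ σ := by
  have hs : 0 < sin (ψm / 2) := sin_pos_of_pos_of_lt_pi (by linarith) (by linarith)
  refine ⟨9 / sin (ψm / 2) ^ 4, by positivity, fun V hc hm => ?_⟩
  by_cases H : ∀ i, intAngle V i ≤ π - ψm / 2
  · exact Or.inl fun i => ⟨hm i, H i⟩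
  obtain ⟨i, hi⟩ := not_forall.mp H
  have hW : π - ψm / 2 < intAngle (fun j => V (j + (i - 1))) 1 := by
    rw [intAngle_comp_add_right, add_sub_cancel]
    exact lt_of_not_ge hi
  have hmW : ∀ j, ψm ≤ intAngle (fun j => V (j + (i - 1))) j := fun j => by
    rw [intAngle_comp_add_right]; exact hm _
  right
  rw [← quadSet_comp_add_right V (i - 1)]
  exact diam_div_rho_le_of_pi_sub_half_lt_intAngle_one h0 (ccwQuad_comp_add_right hc _) hmW hW
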